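/- Let (A, Con, |~) be a cumulative nonmonotonic system and B = (B, Con*, Δ) the canonical cumulative default structure constructed from it. Then every finite consistent set P ∈ Con has exactly one extension in B, namely δ(P) := P̃ ∪ {[Q] | Q ∈ Con, Q ⊆ P̃, Q̃ = P̃}. -/

import Mathlib

/-!
Call a set `S` of tokens coherent with `P` if its facts lie in `P̃` and its tokens `[Q]` satisfy
`Q̃ = P̃`; coherent sets are consistent. Over a coherent background `S` containing some token,
`Φ(P, S) = δ(P)`: a token `[Y]` can only fire consistently next to a token of `S` when
`Ỹ = P̃`, and conversely every element of `δ(P)` is derivable (`[P]` from `P`, then `P̃` from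
`[P]`, then every `[Q]` with `Q ⊆ P̃`). Since `δ(P)` is coherent and contains `[P]`, it is an
extension. An extension `W` must contain a token `[X]` with `X ⊆ P`, since otherwise
`W = P` and `[P]` would fire. Consistency of `W` gives `X |~ P`, so by cumulativity
`X̃ = P̃`, which makes `W` coherent; hence `W = Φ(P, W) = δ(P)`.
-/

/-- A set is consistent if every finite subset of it lies in Con. -/
def IsCons {α : Type*} (Con : Set α → Prop) (S : Set α) : Prop :=
  ∀ X : Set α, X ⊆ S → X.Finite → Con X

/-- With trivial entailment: φ(x, S, 0) = x and
φ(x, S, i+1) = φ(x, S, i) ∪ {a | (X, a) ∈ Δ, X ⊆ φ(x, S, i), {a} ∪ S consistent}. -/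
def phiT {α : Type*} (Con : Set α → Prop) (Δ : Set (Set α × α)) (x S : Set α) :
    ℕ → Set α
  | 0 => x
  | i + 1 =>
      phiT Con Δ x S i ∪
        {a | ∃ X : Set α, (X, a) ∈ Δ ∧ X ⊆ phiT Con Δ x S i ∧ IsCons Con ({a} ∪ S)}

/-- Φ(x, S) = ⋃_{i≥0} φ(x, S, i). -/
def PhiT {α : Type*} (Con : Set α → Prop) (Δ : Set (Set α × α)) (x S : Set α) : Set α :=
  ⋃ i, phiT Con Δ x S i

/-- A consistent set y is an extension of x (x ε y) if Φ(x, y) = y. -/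
def ExtT {α : Type*} (Con : Set α → Prop) (Δ : Set (Set α × α)) (x y : Set α) : Prop :=
  IsCons Con y ∧ PhiT Con Δ x y = y

/-- X̃ := {t ∈ A | X |~ {t}}. -/
def Tilde {α : Type*} (snake : Set α → Set α → Prop) (X : Set α) : Set α :=
  {t | snake X {t}}

/-- The token set of the canonical default structure: tokens of A (`Sum.inl a`) together
with a fresh token [X] (`Sum.inr X`) for each X ∈ Con. -/
abbrev Tok (α : Type*) := α ⊕ Set α

/-- Δ := {(X, [X]) | X ∈ Con} ∪ {({[X]}, a) | X ∈ Con, X |~ {a}, a ∉ X}. -/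
def DeltaCan {α : Type*} (Con : Set α → Prop) (snake : Set α → Set α → Prop) :
    Set (Set (Tok α) × Tok α) :=
  {p | ∃ X : Set α, Con X ∧ p = (Sum.inl '' X, Sum.inr X)} ∪
  {p | ∃ (X : Set α) (a : α), Con X ∧ snake X {a} ∧ a ∉ X ∧
        p = ({Sum.inr X}, Sum.inl a)}

/-- For the cumulative construction: a finite W ⊆ B lies in Con* iff (1) W ∩ A ∈ Con,
(2) for every pair [X], [Y] ∈ W, X̃ = Ỹ, and (3) if [X] ∈ W then X |~ (W ∩ A). -/
def ConStarC {α : Type*} (Con : Set α → Prop) (snake : Set α → Set α → Prop)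
    (W : Set (Tok α)) : Prop :=
  W.Finite ∧
  Con (Sum.inl ⁻¹' W) ∧
  (∀ X Y : Set α, Sum.inr X ∈ W → Sum.inr Y ∈ W → Tilde snake X = Tilde snake Y) ∧
  (∀ X : Set α, Sum.inr X ∈ W → snake X (Sum.inl ⁻¹' W))

/-- δ(P) := P̃ ∪ {[Q] | Q ∈ Con, Q ⊆ P̃, Q̃ = P̃}. -/
def deltaP {α : Type*} (Con : Set α → Prop) (snake : Set α → Set α → Prop)
    (P : Set α) : Set (Tok α) :=
  Sum.inl '' Tilde snake P ∪
    {t | ∃ Q : Set α, Con Q ∧ Q ⊆ Tilde snake P ∧ Tilde snake Q = Tilde snake P ∧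
          t = Sum.inr Q}

namespace NonmonotonicSystem

variable {α : Type*}

section Inference

def Reflexivity (Con : Set α → Prop) (snake : Set α → Set α → Prop) : Prop :=
  ∀ X Y : Set α, Y ⊆ X → Con X → snake X Y

def CautiousCut (snake : Set α → Set α → Prop) : Prop :=
  ∀ X T Y : Set α, snake X T → snake (X ∪ T) Y → snake X Y

def Conjunction (snake : Set α → Set α → Prop) : Prop :=
  ∀ X Y Z : Set α, snake X Y → snake X Z → snake X (Y ∪ Z)

def CautiousMonotony (snake : Set α → Set α → Prop) : Prop :=
  ∀ (X : Set α) (a b : α), snake X {a} → snake X {b} → snake (X ∪ {a}) {b}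

variable {Con : Set α → Prop} {snake : Set α → Set α → Prop}

lemma subset_tilde (hrefl : Reflexivity Con snake) {X : Set α} (hX : Con X) :
    X ⊆ Tilde snake X :=
  fun _ ha => hrefl X _ (Set.singleton_subset_iff.mpr ha) hX

lemma snake_of_subset_tilde (hrefl : Reflexivity Con snake) (hconj : Conjunction snake)
    {X Y : Set α} (hX : Con X) (hY : Y.Finite) (hYX : Y ⊆ Tilde snake X) : snake X Y := by
  induction Y, hY using Set.Finite.induction_on with
  | empty => exact hrefl X ∅ (Set.empty_subset X) hX
  | @insert a Y _ _ ih =>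
    rw [Set.insert_subset_iff] at hYX
    simpa only [Set.singleton_union] using hconj X {a} Y hYX.1 (ih hYX.2)

lemma snake_union_of_subset_tilde (hmono : CautiousMonotony snake) {X Y : Set α}
    (hY : Y.Finite) (hYX : Y ⊆ Tilde snake X) {b : α} (hb : snake X {b}) :
    snake (X ∪ Y) {b} := by
  induction Y, hY using Set.Finite.induction_on generalizing b with
  | empty => rwa [Set.union_empty]
  | @insert a Y _ _ ih =>
    rw [Set.insert_subset_iff] at hYX
    simpa only [Set.union_singleton, Set.union_insert] using
      hmono (X ∪ Y) a b (ih hYX.2 hYX.1) (ih hYX.2 hb)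

lemma tilde_union_of_subset_tilde (hrefl : Reflexivity Con snake) (hcut : CautiousCut snake)
    (hconj : Conjunction snake) (hmono : CautiousMonotony snake) {X Y : Set α} (hX : Con X)
    (hY : Y.Finite) (hYX : Y ⊆ Tilde snake X) : Tilde snake (X ∪ Y) = Tilde snake X :=
  Set.ext fun _ => ⟨hcut X Y _ (snake_of_subset_tilde hrefl hconj hX hY hYX),
    snake_union_of_subset_tilde hmono hY hYX⟩

end Inference

section Closure

variable {Con : Set α → Prop} {Δ : Set (Set α × α)} {x S : Set α}

lemma phiT_mono : Monotone (phiT Con Δ x S) :=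
  monotone_nat_of_le_succ fun _ => Set.subset_union_left

lemma subset_PhiT : x ⊆ PhiT Con Δ x S :=
  Set.subset_iUnion (phiT Con Δ x S) 0

lemma exists_subset_phiT {X : Set α} (hX : X.Finite) (hXS : X ⊆ PhiT Con Δ x S) :
    ∃ i, X ⊆ phiT Con Δ x S i := by
  rw [← hX.coe_toFinset] at hXS ⊢
  exact phiT_mono.directed_le.exists_mem_subset_of_finset_subset_biUnion hXS

lemma mem_PhiT_of_rule {X : Set α} {a : α} (hX : X.Finite) (hΔ : (X, a) ∈ Δ)
    (hXS : X ⊆ PhiT Con Δ x S) (hcons : IsCons Con ({a} ∪ S)) : a ∈ PhiT Con Δ x S := by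
  obtain ⟨i, hi⟩ := exists_subset_phiT hX hXS
  exact Set.mem_iUnion.mpr ⟨i + 1, Or.inr ⟨X, hΔ, hi, hcons⟩⟩

lemma PhiT_subset_of_closed {T : Set α} (hxT : x ⊆ T)
    (hstep : ∀ X a, (X, a) ∈ Δ → X ⊆ T → X ⊆ PhiT Con Δ x S → IsCons Con ({a} ∪ S) → a ∈ T) :
    PhiT Con Δ x S ⊆ T := by
  refine Set.iUnion_subset fun i => ?_
  induction i with
  | zero => exact hxT
  | succ i ih =>
    rintro a (ha | ⟨X, hΔ, hXi, hcons⟩)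
    · exact ih ha
    · exact hstep X a hΔ (hXi.trans ih) (hXi.trans (Set.subset_iUnion _ i)) hcons

lemma mem_or_exists_rule_of_mem_PhiT {a : α} (ha : a ∈ PhiT Con Δ x S) :
    a ∈ x ∨ ∃ X, (X, a) ∈ Δ ∧ X ⊆ PhiT Con Δ x S ∧ IsCons Con ({a} ∪ S) :=
  PhiT_subset_of_closed
    (T := {b | b ∈ x ∨ ∃ X, (X, b) ∈ Δ ∧ X ⊆ PhiT Con Δ x S ∧ IsCons Con ({b} ∪ S)})
    (fun _ => Or.inl)
    (fun X _ hΔ _ hXS hcons => Or.inr ⟨X, hΔ, hXS, hcons⟩) ha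

end Closure

section Canonical

variable {Con : Set α → Prop} {snake : Set α → Set α → Prop} {P : Set α}

@[simp]
lemma inl_mem_deltaP {a : α} : Sum.inl a ∈ deltaP Con snake P ↔ a ∈ Tilde snake P := by
  simp [deltaP]

@[simp]
lemma inr_mem_deltaP {Q : Set α} :
    Sum.inr Q ∈ deltaP Con snake P ↔
      Con Q ∧ Q ⊆ Tilde snake P ∧ Tilde snake Q = Tilde snake P := by
  simp [deltaP]

lemma tilde_eq_of_isCons {W : Set (Tok α)} (hW : IsCons (ConStarC Con snake) W) {X Y : Set α}
    (hX : Sum.inr X ∈ W) (hY : Sum.inr Y ∈ W) : Tilde snake X = Tilde snake Y := by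
  obtain ⟨-, -, hpair, -⟩ :=
    hW {Sum.inr X, Sum.inr Y} (Set.insert_subset hX (Set.singleton_subset_iff.mpr hY))
      (Set.toFinite _)
  exact hpair X Y (by simp) (by simp)

lemma snake_of_isCons {W : Set (Tok α)} (hW : IsCons (ConStarC Con snake) W) {X : Set α}
    {a : α} (hX : Sum.inr X ∈ W) (ha : Sum.inl a ∈ W) : snake X {a} := by
  obtain ⟨-, -, -, hsnake⟩ :=
    hW {Sum.inr X, Sum.inl a} (Set.insert_subset hX (Set.singleton_subset_iff.mpr ha))
      (Set.toFinite _)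
  have hpre : Sum.inl ⁻¹' ({Sum.inr X, Sum.inl a} : Set (Tok α)) = {a} := by
    ext; simp
  simpa only [hpre] using hsnake X (by simp)

def IsCoherent (Con : Set α → Prop) (snake : Set α → Set α → Prop) (P : Set α)
    (S : Set (Tok α)) : Prop :=
  (∀ a, Sum.inl a ∈ S → a ∈ Tilde snake P) ∧
    ∀ Q, Sum.inr Q ∈ S → Con Q ∧ Tilde snake Q = Tilde snake P

lemma IsCoherent.union {S T : Set (Tok α)} (hS : IsCoherent Con snake P S)
    (hT : IsCoherent Con snake P T) : IsCoherent Con snake P (S ∪ T) :=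
  ⟨fun a => Or.rec (hS.1 a) (hT.1 a), fun Q => Or.rec (hS.2 Q) (hT.2 Q)⟩

lemma isCoherent_inl {a : α} (ha : a ∈ Tilde snake P) :
    IsCoherent Con snake P {Sum.inl a} :=
  ⟨by simp [ha], by simp⟩

lemma isCoherent_inr {Q : Set α} (hQ : Con Q) (hQP : Tilde snake Q = Tilde snake P) :
    IsCoherent Con snake P {Sum.inr Q} :=
  ⟨by simp, by simp [hQ, hQP]⟩

lemma isCoherent_deltaP : IsCoherent Con snake P (deltaP Con snake P) :=
  ⟨fun _ => inl_mem_deltaP.mp, fun _ hQ =>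
    have ⟨hQ, _, hQP⟩ := inr_mem_deltaP.mp hQ
    ⟨hQ, hQP⟩⟩

lemma IsCoherent.isCons (hrefl : Reflexivity Con snake) (hconj : Conjunction snake)
    (hdown : ∀ X Y : Set α, X ⊆ Y → Con Y → Con X)
    (hunion : ∀ X T : Set α, snake X T → Con (X ∪ T)) (hP : Con P) {S : Set (Tok α)}
    (hS : IsCoherent Con snake P S) : IsCons (ConStarC Con snake) S := by
  intro W hWS hW
  have hF : (Sum.inl ⁻¹' W).Finite := hW.preimage Sum.inl_injective.injOn
  have hFP : Sum.inl ⁻¹' W ⊆ Tilde snake P := fun a ha => hS.1 a (hWS ha)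
  refine ⟨hW, ?_, fun X Y hX hY => ?_, fun X hX => ?_⟩
  · exact hdown _ _ Set.subset_union_right
      (hunion _ _ (snake_of_subset_tilde hrefl hconj hP hF hFP))
  · rw [(hS.2 X (hWS hX)).2, (hS.2 Y (hWS hY)).2]
  · obtain ⟨hXC, hXP⟩ := hS.2 X (hWS hX)
    exact snake_of_subset_tilde hrefl hconj hXC hF (hXP ▸ hFP)

lemma PhiT_subset_deltaP (hrefl : Reflexivity Con snake) (hP : Con P) {S : Set (Tok α)}
    (hS : IsCoherent Con snake P S) {R : Set α} (hR : Sum.inr R ∈ S) :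
    PhiT (ConStarC Con snake) (DeltaCan Con snake) (Sum.inl '' P) S ⊆ deltaP Con snake P := by
  refine PhiT_subset_of_closed ?_ ?_
  · rintro _ ⟨a, ha, rfl⟩
    exact inl_mem_deltaP.mpr (subset_tilde hrefl hP ha)
  rintro _ _ (⟨Y, hY, ⟨⟩⟩ | ⟨Y, a, -, hYa, -, ⟨⟩⟩) hXδ - hcons
  · refine inr_mem_deltaP.mpr ⟨hY, fun y hy => inl_mem_deltaP.mp (hXδ ⟨y, hy, rfl⟩), ?_⟩
    rw [tilde_eq_of_isCons hcons (Or.inl rfl) (Or.inr hR), (hS.2 R hR).2]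
  · obtain ⟨-, -, hYP⟩ := inr_mem_deltaP.mp (hXδ rfl)
    exact inl_mem_deltaP.mpr (hYP ▸ hYa)

lemma deltaP_subset_PhiT (hrefl : Reflexivity Con snake) (hconj : Conjunction snake)
    (hdown : ∀ X Y : Set α, X ⊆ Y → Con Y → Con X)
    (hunion : ∀ X T : Set α, snake X T → Con (X ∪ T)) (hfin : ∀ X : Set α, Con X → X.Finite)
    (hP : Con P) {S : Set (Tok α)} (hS : IsCoherent Con snake P S) :
    deltaP Con snake P ⊆ PhiT (ConStarC Con snake) (DeltaCan Con snake) (Sum.inl '' P) S := by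
  have hcons {T : Set (Tok α)} (hT : IsCoherent Con snake P T) :
      IsCons (ConStarC Con snake) (T ∪ S) :=
    (hT.union hS).isCons hrefl hconj hdown hunion hP
  have hPΦ : Sum.inr P ∈ PhiT (ConStarC Con snake) (DeltaCan Con snake) (Sum.inl '' P) S :=
    mem_PhiT_of_rule ((hfin P hP).image _) (Or.inl ⟨P, hP, rfl⟩) subset_PhiT
      (hcons (isCoherent_inr hP rfl))
  have hinl {a : α} (ha : a ∈ Tilde snake P) :
      Sum.inl a ∈ PhiT (ConStarC Con snake) (DeltaCan Con snake) (Sum.inl '' P) S := by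
    by_cases haP : a ∈ P
    · exact subset_PhiT ⟨a, haP, rfl⟩
    · exact mem_PhiT_of_rule (Set.finite_singleton _) (Or.inr ⟨P, a, hP, ha, haP, rfl⟩)
        (Set.singleton_subset_iff.mpr hPΦ) (hcons (isCoherent_inl ha))
  rintro (a | Q) hδ
  · exact hinl (inl_mem_deltaP.mp hδ)
  · obtain ⟨hQ, hQP, hQP'⟩ := inr_mem_deltaP.mp hδ
    exact mem_PhiT_of_rule ((hfin Q hQ).image _) (Or.inl ⟨Q, hQ, rfl⟩)
      (Set.image_subset_iff.mpr fun q hq => hinl (hQP hq)) (hcons (isCoherent_inr hQ hQP'))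

lemma PhiT_eq_deltaP (hrefl : Reflexivity Con snake) (hconj : Conjunction snake)
    (hdown : ∀ X Y : Set α, X ⊆ Y → Con Y → Con X)
    (hunion : ∀ X T : Set α, snake X T → Con (X ∪ T)) (hfin : ∀ X : Set α, Con X → X.Finite)
    (hP : Con P) {S : Set (Tok α)} (hS : IsCoherent Con snake P S) {R : Set α}
    (hR : Sum.inr R ∈ S) :
    PhiT (ConStarC Con snake) (DeltaCan Con snake) (Sum.inl '' P) S = deltaP Con snake P :=
  (PhiT_subset_deltaP hrefl hP hS hR).antisymm
    (deltaP_subset_PhiT hrefl hconj hdown hunion hfin hP hS)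

end Canonical

section Extension

variable {Con : Set α → Prop} {snake : Set α → Set α → Prop} {P : Set α} {W : Set (Tok α)}

lemma con_and_image_subset_of_inr_mem
    (hW : ExtT (ConStarC Con snake) (DeltaCan Con snake) (Sum.inl '' P) W) {X : Set α}
    (hX : Sum.inr X ∈ W) : Con X ∧ Sum.inl '' X ⊆ W := by
  rw [← hW.2] at hX ⊢
  rcases mem_or_exists_rule_of_mem_PhiT hX with
    ⟨_, -, ⟨⟩⟩ | ⟨_, ⟨Y, hY, ⟨⟩⟩ | ⟨_, _, -, -, -, ⟨⟩⟩, hYW, -⟩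
  exact ⟨hY, hYW⟩

lemma exists_inr_mem_subset_of_ext (hrefl : Reflexivity Con snake) (hconj : Conjunction snake)
    (hdown : ∀ X Y : Set α, X ⊆ Y → Con Y → Con X)
    (hunion : ∀ X T : Set α, snake X T → Con (X ∪ T)) (hfin : ∀ X : Set α, Con X → X.Finite)
    (hP : Con P) (hW : ExtT (ConStarC Con snake) (DeltaCan Con snake) (Sum.inl '' P) W) :
    ∃ X, Sum.inr X ∈ W ∧ X ⊆ P := by
  by_contra! hno
  have hWP : W ⊆ Sum.inl '' P := by
    rw [← hW.2]
    refine PhiT_subset_of_closed subset_rfl ?_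
    rintro _ _ (⟨Z, hZ, ⟨⟩⟩ | ⟨Z, a, -, -, -, ⟨⟩⟩) hZP hZΦ hcons
    · have hZW : Sum.inr Z ∈ W :=
        hW.2 ▸ mem_PhiT_of_rule ((hfin Z hZ).image _) (Or.inl ⟨Z, hZ, rfl⟩) hZΦ hcons
      exact (hno Z hZW ((Set.image_subset_image_iff Sum.inl_injective).mp hZP)).elim
    · simpa using hZP rfl
  have hWcoh : IsCoherent Con snake P W :=
    ⟨fun a ha => by
      obtain ⟨b, hb, ⟨⟩⟩ := hWP ha
      exact subset_tilde hrefl hP hb,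
    fun Q hQ => by simpa using hWP hQ⟩
  have hPW : Sum.inr P ∈ W :=
    hW.2 ▸ mem_PhiT_of_rule ((hfin P hP).image _) (Or.inl ⟨P, hP, rfl⟩) subset_PhiT
      (((isCoherent_inr hP rfl).union hWcoh).isCons hrefl hconj hdown hunion hP)
  exact hno P hPW subset_rfl

lemma isCoherent_of_ext (hrefl : Reflexivity Con snake) (hcut : CautiousCut snake)
    (hconj : Conjunction snake) (hmono : CautiousMonotony snake)
    (hdown : ∀ X Y : Set α, X ⊆ Y → Con Y → Con X)
    (hunion : ∀ X T : Set α, snake X T → Con (X ∪ T)) (hfin : ∀ X : Set α, Con X → X.Finite)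
    (hP : Con P) (hW : ExtT (ConStarC Con snake) (DeltaCan Con snake) (Sum.inl '' P) W) :
    IsCoherent Con snake P W ∧ ∃ R, Sum.inr R ∈ W := by
  obtain ⟨X, hXW, hXP⟩ := exists_inr_mem_subset_of_ext hrefl hconj hdown hunion hfin hP hW
  have hPW : Sum.inl '' P ⊆ W := hW.2 ▸ subset_PhiT
  have hPX : P ⊆ Tilde snake X := fun p hp => snake_of_isCons hW.1 hXW (hPW ⟨p, hp, rfl⟩)
  have hXP' : Tilde snake X = Tilde snake P := by
    have := tilde_union_of_subset_tilde hrefl hcut hconj hmono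
      (con_and_image_subset_of_inr_mem hW hXW).1 (hfin P hP) hPX
    rwa [Set.union_eq_self_of_subset_left hXP, eq_comm] at this
  refine ⟨⟨fun a ha => hXP' ▸ snake_of_isCons hW.1 hXW ha, fun Q hQ => ?_⟩, X, hXW⟩
  exact ⟨(con_and_image_subset_of_inr_mem hW hQ).1, (tilde_eq_of_isCons hW.1 hQ hXW).trans hXP'⟩

end Extension

end NonmonotonicSystem

open NonmonotonicSystem

theorem canonical_unique_extension_general {α : Type*} (Con : Set α → Prop)
    (snake : Set α → Set α → Prop)
    -- Con is a collection of finite subsets of A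
    (hCfin : ∀ X : Set α, Con X → X.Finite)
    (h1 : ∀ X Y : Set α, X ⊆ Y → Con Y → Con X)
    (h3 : ∀ X T : Set α, snake X T → Con (X ∪ T))
    (h4 : ∀ X Y : Set α, Y ⊆ X → Con X → snake X Y)
    (h5 : ∀ X T Y : Set α, snake X T → snake (X ∪ T) Y → snake X Y)
    (h6 : ∀ X Y Z : Set α, snake X Y → snake X Z → snake X (Y ∪ Z))
    -- cautious monotony
    (hcm : ∀ (X : Set α) (a b : α), snake X {a} → snake X {b} → snake (X ∪ {a}) {b}) :
    ∀ P : Set α, Con P →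
      ExtT (ConStarC Con snake) (DeltaCan Con snake) (Sum.inl '' P)
        (deltaP Con snake P) ∧
      ∀ W : Set (Tok α),
        ExtT (ConStarC Con snake) (DeltaCan Con snake) (Sum.inl '' P) W →
        W = deltaP Con snake P := by
  intro P hP
  have hδ : IsCoherent Con snake P (deltaP Con snake P) := isCoherent_deltaP
  refine ⟨⟨hδ.isCons h4 h6 h1 h3 hP, ?_⟩, fun W hW => ?_⟩
  · exact PhiT_eq_deltaP h4 h6 h1 h3 hCfin hP hδ
      (inr_mem_deltaP.mpr ⟨hP, subset_tilde h4 hP, rfl⟩)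
  · obtain ⟨hWcoh, R, hR⟩ := isCoherent_of_ext h4 h5 h6 hcm h1 h3 hCfin hP hW
    rw [← hW.2]
    exact PhiT_eq_deltaP h4 h6 h1 h3 hCfin hP hWcoh hR

/-- in the canonical cumulative default structure, every finite consistent
set P ∈ Con has exactly one extension, namely δ(P). -/
theorem canonical_unique_extension {α : Type*} (Con : Set α → Prop)
    (snake : Set α → Set α → Prop)
    -- Con is a collection of finite subsets of A
    (hCfin : ∀ X : Set α, Con X → X.Finite)
    -- |~ is a relation between members of Con
    (hSnakeCon : ∀ X Y : Set α, snake X Y → Con X ∧ Con Y)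
    (h1 : ∀ X Y : Set α, X ⊆ Y → Con Y → Con X)
    (h2 : ∀ a : α, Con {a})
    (h3 : ∀ X T : Set α, snake X T → Con (X ∪ T))
    (h4 : ∀ X Y : Set α, Y ⊆ X → Con X → snake X Y)
    (h5 : ∀ X T Y : Set α, snake X T → snake (X ∪ T) Y → snake X Y)
    (h6 : ∀ X Y Z : Set α, snake X Y → snake X Z → snake X (Y ∪ Z))
    -- cautious monotony
    (hcm : ∀ (X : Set α) (a b : α), snake X {a} → snake X {b} → snake (X ∪ {a}) {b}) :
    ∀ P : Set α, Con P →
      ExtT (ConStarC Con snake) (DeltaCan Con snake) (Sum.inl '' P)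
        (deltaP Con snake P) ∧
      ∀ W : Set (Tok α),
        ExtT (ConStarC Con snake) (DeltaCan Con snake) (Sum.inl '' P) W →
        W = deltaP Con snake P :=
  canonical_unique_extension_general Con snake hCfin h1 h3 h4 h5 h6 hcm
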